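/- arXiv:2410.09853 — 5 statements merged into one kernel-verified Lean document; each statement's English description precedes it below -/
import Mathlib

section
/- Let f : P → Q be a bijection between two complete L-ordered sets. If f preserves infima of L-subsets, then f is an L-order-isomorphism. -/
/-- A commutative integral quantale: a complete lattice with a commutative
monoid structure whose unit is the top element and which distributes over
arbitrary joins; `res` is the residuum determined by adjointness. -/
class CIQuantale (L : Type*) extends CompleteLattice L, CommMonoid L where
  mul_sSup : ∀ (a : L) (S : Set L), a * sSup S = ⨆ b ∈ S, a * b
  one_eq_top : (1 : L) = ⊤
  res : L → L → L
  res_adj : ∀ a b c : L, a * b ≤ c ↔ a ≤ res b c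

open CIQuantale

variable {L : Type*} [CIQuantale L]

/-- The inclusion L-order `sub` on `L^X`. -/
def lsub {X : Type*} (A B : X → L) : L := ⨅ x, res (A x) (B x)

/-- Zadeh forward image. -/
def fimg {X Y : Type*} (f : X → Y) (A : X → L) : Y → L :=
  fun y => ⨆ x, ⨆ _ : f x = y, A x

/-- Zadeh preimage. -/
def fpre {X Y : Type*} (f : X → Y) (B : Y → L) : X → L := fun x => B (f x)

/-- `e` is an L-order. -/
def IsLOrder {P : Type*} (e : P → P → L) : Prop :=
  (∀ x, e x x = 1) ∧ (∀ x y z, e x y * e y z ≤ e x z) ∧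
  (∀ x y, e x y ⊓ e y x = 1 → x = y)

/-- `x₀` is a supremum of `A` (definition form). -/
def IsSupD {P : Type*} (e : P → P → L) (A : P → L) (x₀ : P) : Prop :=
  (∀ x, A x ≤ e x x₀) ∧ ∀ y, (⨅ x, res (A x) (e x y)) ≤ e x₀ y

/-- `x₀` is an infimum of `A` (definition form). -/
def IsInfD {P : Type*} (e : P → P → L) (A : P → L) (x₀ : P) : Prop :=
  (∀ x, A x ≤ e x₀ x) ∧ ∀ y, (⨅ x, res (A x) (e y x)) ≤ e y x₀

/-- `x₀` is a supremum of `A` (characterization form). -/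
def IsSupE {P : Type*} (e : P → P → L) (A : P → L) (x₀ : P) : Prop :=
  ∀ y, e x₀ y = ⨅ x, res (A x) (e x y)

/-- `x₀` is an infimum of `A` (characterization form). -/
def IsInfE {P : Type*} (e : P → P → L) (A : P → L) (x₀ : P) : Prop :=
  ∀ y, e y x₀ = ⨅ x, res (A x) (e y x)

/-- A stratified L-convex structure on `X`. -/
def IsConvexStruct {X : Type*} (𝒞 : Set (X → L)) : Prop :=
  ((fun _ => (⊥ : L)) ∈ 𝒞) ∧ ((fun _ => (⊤ : L)) ∈ 𝒞) ∧
  (∀ D : Set (X → L), D ⊆ 𝒞 → D.Nonempty → DirectedOn (· ≤ ·) D →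
    (fun x => ⨆ C ∈ D, C x) ∈ 𝒞) ∧
  (∀ D : Set (X → L), D ⊆ 𝒞 → (fun x => ⨅ C ∈ D, C x) ∈ 𝒞) ∧
  (∀ p : L, ∀ C ∈ 𝒞, (fun x => res p (C x)) ∈ 𝒞)

/-- The hull operator of the convex structure `𝒞`. -/
def hull {X : Type*} (𝒞 : Set (X → L)) (A : X → L) : X → L :=
  fun x => ⨅ C ∈ {C | C ∈ 𝒞 ∧ A ≤ C}, C x

/-- Convexity-preserving maps. -/
def ConvPres {X Y : Type*} (𝒞X : Set (X → L)) (𝒞Y : Set (Y → L)) (f : X → Y) : Prop :=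
  ∀ D ∈ 𝒞Y, fpre f D ∈ 𝒞X

/-- The characteristic function `1_x`. -/
def lchar {X : Type*} (x : X) : X → L := fun y => ⨆ _ : y = x, (1 : L)

/-- Algebraic irreducible convex sets. -/
def AlgIrr {X : Type*} (𝒞 : Set (X → L)) (F : X → L) : Prop :=
  F ∈ 𝒞 ∧ (⨆ x, F x) = 1 ∧
  ∀ D : Set (X → L), D ⊆ 𝒞 → D.Nonempty → DirectedOn (· ≤ ·) D →
    lsub F (fun x => ⨆ C ∈ D, C x) = ⨆ C ∈ D, lsub F C

/-- Sober L-convex spaces (Liu–Yue). -/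
def Sober {X : Type*} (𝒞 : Set (X → L)) : Prop :=
  ∀ F, AlgIrr 𝒞 F → ∃! a : X, F = hull 𝒞 (lchar a)

/-- The S₀ separation axiom (hull form). -/
def S0 {X : Type*} (𝒞 : Set (X → L)) : Prop :=
  ∀ x y : X, hull 𝒞 (lchar x) = hull 𝒞 (lchar y) → x = y

/-- The S₀ separation axiom (separation form). -/
def S0sep {X : Type*} (𝒞 : Set (X → L)) : Prop :=
  ∀ x y : X, x ≠ y → ∃ C ∈ 𝒞, C x ≠ C y

/-- Homeomorphism of L-convex spaces. -/
def Homeo {A B : Type*} (𝒞A : Set (A → L)) (𝒞B : Set (B → L)) (h : A → B) : Prop :=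
  Function.Bijective h ∧ ConvPres 𝒞A 𝒞B h ∧ ∀ C ∈ 𝒞A, fimg h C ∈ 𝒞B


lemma one_le_res' {a b : L} (h : a ≤ b) : (1:L) ≤ res a b :=
  (res_adj 1 a b).mp (by rwa [one_mul])

lemma res_one_le' (c : L) : res (1:L) c ≤ c := by
  have h := (res_adj (res (1:L) c) 1 c).mpr le_rfl
  rwa [mul_one] at h

lemma eq_one_of_one_le' {a : L} (h : (1:L) ≤ a) : a = 1 :=
  le_antisymm (by rw [one_eq_top]; exact le_top) h

lemma infD_unique' {P : Type*} {e : P → P → L} (hP : IsLOrder e)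
    {A : P → L} {a b : P} (ha : IsInfD e A a) (hb : IsInfD e A b) : a = b := by
  have key : ∀ u v : P, IsInfD e A u → IsInfD e A v → e u v = 1 := by
    intro u v hu hv
    exact eq_one_of_one_le' (le_trans (le_iInf fun z => one_le_res' (hu.1 z)) (hv.2 u))
  exact hP.2.2 a b (by rw [key a b ha hb, key b a hb ha, inf_idem])

lemma infD_self' {P : Type*} {e : P → P → L} (hP : IsLOrder e) (x : P) :
    IsInfD e (fun z => e x z) x := by
  refine ⟨fun z => le_rfl, fun y => le_trans (iInf_le _ x) ?_⟩
  show res (e x x) (e y x) ≤ e y x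
  rw [hP.1 x]
  exact res_one_le' _

lemma fimg_apply' {X Y : Type*} {f : X → Y} (hf : Function.Injective f)
    (A : X → L) (p : X) : fimg f A (f p) = A p := by
  refine le_antisymm (iSup_le fun z => iSup_le fun h => by rw [hf h]) ?_
  exact le_iSup_of_le p (le_iSup_of_le rfl le_rfl)

theorem stmt10 {P Q : Type*} (eP : P → P → L) (eQ : Q → Q → L)
    (hP : IsLOrder eP) (hQ : IsLOrder eQ)
    (hPc : ∀ A : P → L, ∃ x₀, IsInfD eP A x₀)
    (hQc : ∀ A : Q → L, ∃ x₀, IsInfD eQ A x₀)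
    (f : P → Q) (hf : Function.Bijective f)
    (hpres : ∀ (A : P → L) (x₀ : P), IsInfD eP A x₀ → IsInfD eQ (fimg f A) (f x₀)) :
    ∀ x y : P, eP x y = eQ (f x) (f y) := by
  intro x y
  apply le_antisymm
  · have h2 := hpres _ _ (infD_self' hP x)
    have h3 := h2.1 (f y)
    rwa [fimg_apply' hf.1] at h3
  · obtain ⟨x₀, hx₀⟩ := hPc (fun p => eQ (f x) (f p))
    have h2 := hpres _ _ hx₀
    have heq : fimg f (fun p => eQ (f x) (f p)) = fun q => eQ (f x) q := by
      funext q; obtain ⟨p, rfl⟩ := hf.2 q; rw [fimg_apply' hf.1]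
    rw [heq] at h2
    have hxx : x₀ = x := hf.1 (infD_unique' hQ h2 (infD_self' hQ (f x)))
    have h := hx₀.1 y
    rwa [hxx] at h
end

section
/- For every x in an L-convex space X, the hull co(1_x) of the characteristic function of x is an algebraic irreducible convex set, i.e., ⋁_{y∈X} co(1_x)(y) = 1 and sub(co(1_x), ⋁↑_i C_i) = ⋁↑_i sub(co(1_x), C_i) for every directed family {C_i} of convex sets. -/
open CIQuantale

variable {L : Type*} [CIQuantale L]

lemma res_one' (c : L) : res (1:L) c = c := by
  apply le_antisymm
  · have h := (res_adj (res (1:L) c) 1 c).2 le_rfl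
    simpa using h
  · exact (res_adj c 1 c).1 (by simp)

lemma top_le_res_self' (b : L) : (⊤:L) ≤ res b b := by
  rw [← one_eq_top]
  exact (res_adj 1 b b).1 (by simp)

lemma hull_mem' {X : Type*} (𝒞 : Set (X → L)) (h : IsConvexStruct 𝒞) (A : X → L) :
    hull 𝒞 A ∈ 𝒞 := h.2.2.2.1 _ (fun _ hC => hC.1)

lemma hull_lchar_self {X : Type*} (𝒞 : Set (X → L)) (x : X) :
    hull 𝒞 (lchar x) x = ⊤ := by
  apply le_antisymm le_top
  refine le_iInf fun C => le_iInf fun hC => ?_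
  have := hC.2 x
  simpa [lchar, one_eq_top] using this

lemma lsub_hull_lchar {X : Type*} (𝒞 : Set (X → L)) (h𝒞 : IsConvexStruct 𝒞) (x : X)
    (C : X → L) (hC : C ∈ 𝒞) : lsub (hull 𝒞 (lchar x)) C = C x := by
  apply le_antisymm
  · calc lsub (hull 𝒞 (lchar x)) C ≤ res (hull 𝒞 (lchar x) x) (C x) := iInf_le _ x
    _ = C x := by rw [hull_lchar_self, ← one_eq_top, res_one']
  · -- C x ≤ res (hull y) (C y) for all y
    refine le_iInf fun y => ?_
    rw [← res_adj]
    rw [mul_comm]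
    rw [res_adj]
    -- hull 𝒞 (lchar x) y ≤ res (C x) (C y)
    have hD : (fun y => res (C x) (C y)) ∈ 𝒞 := h𝒞.2.2.2.2 (C x) C hC
    have hle : lchar x ≤ fun y => res (C x) (C y) := by
      intro z
      simp only [lchar, iSup_le_iff]
      rintro rfl
      rw [one_eq_top]
      exact top_le_res_self' (C z)
    exact iInf_le_of_le (fun y => res (C x) (C y))
      (by exact iInf_le_of_le ⟨hD, hle⟩ le_rfl)

theorem stmt11 {X : Type*} (𝒞 : Set (X → L)) (h𝒞 : IsConvexStruct 𝒞) (x : X) :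
    AlgIrr 𝒞 (hull 𝒞 (lchar x)) := by
  refine ⟨hull_mem' 𝒞 h𝒞 _, ?_, ?_⟩
  · rw [one_eq_top]
    apply le_antisymm le_top
    rw [← hull_lchar_self 𝒞 x]
    exact le_iSup _ x
  · intro D hD hne hdir
    have hU : (fun y => ⨆ C ∈ D, C y) ∈ 𝒞 := h𝒞.2.2.1 D hD hne hdir
    rw [lsub_hull_lchar 𝒞 h𝒞 x _ hU]
    exact iSup_congr fun C => iSup_congr fun hC => (lsub_hull_lchar 𝒞 h𝒞 x C (hD hC)).symm
end

section
/- Every retraction kernel of a sober L-convex space is sober: if X is a sober L-convex space and there exist convexity-preserving maps r : X → Y and d : Y → X with r∘d = id_Y, then Y is a sober L-convex space. -/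
open CIQuantale

variable {L : Type*} [CIQuantale L]

/- ## Auxiliary lemmas -/

lemma cq_mul_bot (a : L) : a * (⊥ : L) = ⊥ := by
  have h := mul_sSup a (∅ : Set L)
  simpa using h

lemma cq_mul_mono_right (a : L) {b b' : L} (h : b ≤ b') : a * b ≤ a * b' := by
  have h1 : sSup ({b, b'} : Set L) = b' := by
    rw [sSup_pair, sup_eq_right.mpr h]
  have h2 := mul_sSup a ({b, b'} : Set L)
  rw [h1] at h2
  rw [h2]
  simp only [Set.mem_insert_iff, Set.mem_singleton_iff]
  exact le_iSup_of_le b (le_iSup_of_le (Or.inl rfl) le_rfl)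

lemma cq_mul_iSup {ι : Sort*} (a : L) (f : ι → L) : a * (⨆ i, f i) = ⨆ i, a * f i := by
  rw [iSup, mul_sSup, iSup_range]

lemma cq_res_of_le {b c : L} (h : b ≤ c) : (⊤ : L) ≤ res b c := by
  refine (res_adj ⊤ b c).mp ?_
  calc (⊤ : L) * b = 1 * b := by rw [one_eq_top]
  _ = b := one_mul b
  _ ≤ c := h

lemma cq_res_self (a : L) : res a a = ⊤ := le_antisymm le_top (cq_res_of_le le_rfl)

lemma cq_res_bot_left (c : L) : res (⊥ : L) c = ⊤ :=
  le_antisymm le_top ((res_adj ⊤ ⊥ c).mp (by rw [cq_mul_bot]; exact bot_le))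

lemma cq_res_one_left (c : L) : res (1 : L) c = c := by
  apply le_antisymm
  · have := (res_adj (res 1 c) 1 c).mpr le_rfl
    simpa using this
  · exact (res_adj c 1 c).mp (by simp)

lemma cq_res_anti_left {b b' : L} (c : L) (h : b ≤ b') : res b' c ≤ res b c := by
  refine (res_adj _ _ _).mp ?_
  calc res b' c * b ≤ res b' c * b' := cq_mul_mono_right _ h
  _ ≤ c := (res_adj _ _ _).mpr le_rfl

lemma cq_res_iSup_left {ι : Sort*} (f : ι → L) (c : L) :
    res (⨆ i, f i) c = ⨅ i, res (f i) c := by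
  apply le_antisymm
  · exact le_iInf fun i => cq_res_anti_left c (le_iSup f i)
  · refine (res_adj _ _ _).mp ?_
    rw [cq_mul_iSup]
    exact iSup_le fun i => (res_adj _ _ _).mpr (iInf_le _ i)

lemma cq_le_lsub_iff {X : Type*} (a : L) (A B : X → L) :
    a ≤ lsub A B ↔ ∀ x, a * A x ≤ B x := by
  unfold lsub
  rw [le_iInf_iff]
  exact forall_congr' fun x => (res_adj a (A x) (B x)).symm

lemma cq_lsub_eq_top_iff {X : Type*} (A B : X → L) : lsub A B = ⊤ ↔ A ≤ B := by
  constructor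
  · intro h
    intro x
    have := (cq_le_lsub_iff ⊤ A B).mp h.ge x
    rw [← one_eq_top, one_mul] at this
    exact this
  · intro h
    refine le_antisymm le_top (le_iInf fun x => cq_res_of_le (h x))

lemma cq_lsub_self {X : Type*} (A : X → L) : lsub A A = ⊤ :=
  (cq_lsub_eq_top_iff A A).mpr le_rfl

lemma cq_lsub_anti_left {X : Type*} {A A' : X → L} (B : X → L) (h : A ≤ A') :
    lsub A' B ≤ lsub A B :=
  le_iInf fun x => (iInf_le _ x).trans (cq_res_anti_left _ (h x))

lemma cq_lchar_self {X : Type*} (x : X) : lchar x x = (⊤ : L) := by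
  unfold lchar
  rw [iSup_pos rfl, one_eq_top]

lemma cq_lsub_lchar {X : Type*} (x : X) (C : X → L) : lsub (lchar x) C = C x := by
  unfold lsub
  apply le_antisymm
  · refine (iInf_le _ x).trans ?_
    rw [cq_lchar_self, ← one_eq_top, cq_res_one_left]
  · refine le_iInf fun y => ?_
    by_cases h : y = x
    · subst h
      rw [cq_lchar_self, ← one_eq_top, cq_res_one_left]
    · have : lchar x y = (⊥ : L) := by unfold lchar; exact iSup_neg h
      rw [this, cq_res_bot_left]
      exact le_top

lemma cq_hull_mem {X : Type*} {𝒞 : Set (X → L)} (h : IsConvexStruct 𝒞) (A : X → L) :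
    hull 𝒞 A ∈ 𝒞 :=
  h.2.2.2.1 {C | C ∈ 𝒞 ∧ A ≤ C} (fun _ hC => hC.1)

lemma cq_le_hull {X : Type*} (𝒞 : Set (X → L)) (A : X → L) : A ≤ hull 𝒞 A :=
  fun x => le_iInf fun _ => le_iInf fun hC => hC.2 x

lemma cq_hull_le {X : Type*} {𝒞 : Set (X → L)} {A C : X → L} (hC : C ∈ 𝒞) (h : A ≤ C) :
    hull 𝒞 A ≤ C :=
  fun x => iInf₂_le C ⟨hC, h⟩

lemma cq_lsub_hull_left {X : Type*} {𝒞 : Set (X → L)} (hconv : IsConvexStruct 𝒞)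
    (A C : X → L) (hC : C ∈ 𝒞) : lsub (hull 𝒞 A) C = lsub A C := by
  apply le_antisymm
  · exact cq_lsub_anti_left C (cq_le_hull 𝒞 A)
  · set a := lsub A C with ha
    have hC' : (fun x => res a (C x)) ∈ 𝒞 := hconv.2.2.2.2 a C hC
    have hAC' : A ≤ fun x => res a (C x) := by
      intro x
      refine (res_adj (A x) a (C x)).mp ?_
      rw [mul_comm]
      exact (cq_le_lsub_iff a A C).mp le_rfl x
    have hh := cq_hull_le hC' hAC'
    refine (cq_le_lsub_iff a (hull 𝒞 A) C).mpr fun x => ?_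
    rw [mul_comm]
    exact (res_adj _ _ _).mpr (hh x)

lemma cq_lsub_fimg {X Y : Type*} (f : X → Y) (A : X → L) (B : Y → L) :
    lsub (fimg f A) B = lsub A (fpre f B) := by
  unfold lsub fimg fpre
  apply le_antisymm
  · refine le_iInf fun x => (iInf_le _ (f x)).trans ?_
    exact cq_res_anti_left _ (le_iSup_of_le x (le_iSup_of_le rfl le_rfl))
  · refine le_iInf fun y => ?_
    rw [cq_res_iSup_left]
    refine le_iInf fun x => ?_
    rw [cq_res_iSup_left]
    refine le_iInf fun hxy => ?_
    subst hxy
    exact iInf_le _ x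

lemma cq_conv_ext {X : Type*} {𝒞 : Set (X → L)} {F F' : X → L}
    (hF : F ∈ 𝒞) (hF' : F' ∈ 𝒞) (h : ∀ C ∈ 𝒞, lsub F C = lsub F' C) : F = F' := by
  have h1 : F ≤ F' := by
    refine (cq_lsub_eq_top_iff F F').mp ?_
    rw [h F' hF', cq_lsub_self]
  have h2 : F' ≤ F := by
    refine (cq_lsub_eq_top_iff F' F).mp ?_
    rw [← h F hF, cq_lsub_self]
  exact le_antisymm h1 h2

theorem stmt14 {X Y : Type*} (𝒞X : Set (X → L)) (𝒞Y : Set (Y → L))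
    (hX : IsConvexStruct 𝒞X) (hY : IsConvexStruct 𝒞Y)
    (r : X → Y) (d : Y → X)
    (hr : ConvPres 𝒞X 𝒞Y r) (hd : ConvPres 𝒞Y 𝒞X d)
    (hrd : r ∘ d = id) (hsX : Sober 𝒞X) : Sober 𝒞Y := by
  have hrd' : ∀ y, r (d y) = y := fun y => congrFun hrd y
  intro G hG
  obtain ⟨hGc, hGtop, hGdir⟩ := hG
  set F : X → L := hull 𝒞X (fimg d G) with hFdef
  -- the key computation
  have key : ∀ C ∈ 𝒞X, lsub F C = lsub G (fpre d C) := by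
    intro C hC
    rw [hFdef, cq_lsub_hull_left hX _ _ hC, cq_lsub_fimg]
  -- F is algebraic irreducible
  have hFirr : AlgIrr 𝒞X F := by
    refine ⟨cq_hull_mem hX _, ?_, ?_⟩
    · rw [one_eq_top]
      refine le_antisymm le_top ?_
      rw [← one_eq_top, ← hGtop]
      refine iSup_le fun y => ?_
      refine le_iSup_of_le (d y) ?_
      calc G y ≤ fimg d G (d y) := le_iSup_of_le y (le_iSup_of_le rfl le_rfl)
      _ ≤ F (d y) := cq_le_hull 𝒞X (fimg d G) (d y)
    · intro D hD hDne hDdir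
      set D' : Set (Y → L) := (fpre d) '' D with hD'def
      have hD'sub : D' ⊆ 𝒞Y := by
        rintro _ ⟨C, hC, rfl⟩
        exact hd C (hD hC)
      have hD'ne : D'.Nonempty := hDne.image _
      have hD'dir : DirectedOn (· ≤ ·) D' := by
        rintro _ ⟨C1, hC1, rfl⟩ _ ⟨C2, hC2, rfl⟩
        obtain ⟨C3, hC3, h13, h23⟩ := hDdir C1 hC1 C2 hC2
        exact ⟨fpre d C3, ⟨C3, hC3, rfl⟩, fun y => h13 (d y), fun y => h23 (d y)⟩
      have hsupmem : (fun x => ⨆ C ∈ D, C x) ∈ 𝒞X := hX.2.2.1 D hD hDne hDdir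
      have hpre : fpre d (fun x => ⨆ C ∈ D, C x) = fun y => ⨆ C' ∈ D', C' y := by
        funext y
        rw [hD'def, iSup_image]
        rfl
      rw [key _ hsupmem, hpre, hGdir D' hD'sub hD'ne hD'dir, hD'def, iSup_image]
      refine iSup_congr fun C => iSup_congr fun hC => ?_
      exact (key C (hD hC)).symm
  obtain ⟨a, haF, hauniq⟩ := hsX F hFirr
  -- key evaluation: for convex C' in Y, lsub G C' = C' (r a)
  have keyY : ∀ C' ∈ 𝒞Y, lsub G C' = C' (r a) := by
    intro C' hC'
    have hpre : fpre d (fpre r C') = C' := by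
      funext y
      show C' (r (d y)) = C' y
      rw [hrd' y]
    calc lsub G C' = lsub G (fpre d (fpre r C')) := by rw [hpre]
    _ = lsub F (fpre r C') := (key _ (hr C' hC')).symm
    _ = lsub (hull 𝒞X (lchar a)) (fpre r C') := by rw [haF]
    _ = lsub (lchar a) (fpre r C') := cq_lsub_hull_left hX _ _ (hr C' hC')
    _ = C' (r a) := cq_lsub_lchar a (fpre r C')
  have hGra : G (r a) = ⊤ := by
    rw [← keyY G hGc, cq_lsub_self]
  have hchar_le : lchar (r a) ≤ G := by
    intro y
    unfold lchar
    refine iSup_le fun h => ?_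
    subst h
    rw [hGra, one_eq_top]
  have hGeq : G = hull 𝒞Y (lchar (r a)) := by
    apply le_antisymm
    · refine (cq_lsub_eq_top_iff G (hull 𝒞Y (lchar (r a)))).mp ?_
      rw [keyY _ (cq_hull_mem hY _)]
      refine le_antisymm le_top ?_
      calc (⊤ : L) = lchar (r a) (r a) := (cq_lchar_self (r a)).symm
      _ ≤ hull 𝒞Y (lchar (r a)) (r a) := cq_le_hull 𝒞Y (lchar (r a)) (r a)
    · exact cq_hull_le hGc hchar_le
  refine ⟨r a, hGeq, ?_⟩
  intro b hb
  -- uniqueness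
  have hFb : F = hull 𝒞X (lchar (d b)) := by
    refine cq_conv_ext (cq_hull_mem hX _) (cq_hull_mem hX _) fun C hC => ?_
    calc lsub F C = lsub G (fpre d C) := key C hC
    _ = lsub (hull 𝒞Y (lchar b)) (fpre d C) := by rw [hb]
    _ = lsub (lchar b) (fpre d C) := cq_lsub_hull_left hY _ _ (hd C hC)
    _ = C (d b) := cq_lsub_lchar b (fpre d C)
    _ = lsub (lchar (d b)) C := (cq_lsub_lchar (d b) C).symm
    _ = lsub (hull 𝒞X (lchar (d b))) C := (cq_lsub_hull_left hX _ _ hC).symm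
  have hdb : d b = a := hauniq (d b) hFb
  calc b = r (d b) := (hrd' b).symm
  _ = r a := by rw [hdb]
end

section
/- Let f : X → Y be a quasihomeomorphism between L-convex spaces, i.e., f is convexity-preserving and f^← : 𝒞(Y) → 𝒞(X) is a bijection. Then the inverse map f_* : 𝒞(X) → 𝒞(Y) of f^← is an L-order-isomorphism between (𝒞(X), sub_X) and (𝒞(Y), sub_Y). -/
open CIQuantale

variable {L : Type*} [CIQuantale L]

theorem stmt18 {X Y : Type*} (𝒞X : Set (X → L)) (𝒞Y : Set (Y → L))
    (hX : IsConvexStruct 𝒞X) (hY : IsConvexStruct 𝒞Y)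
    (f : X → Y) (hf : ConvPres 𝒞X 𝒞Y f)
    (hbij : Function.Bijective
      (fun D : {D : Y → L // D ∈ 𝒞Y} =>
        (⟨fpre f D.1, hf D.1 D.2⟩ : {C : X → L // C ∈ 𝒞X})))
    (g : {C : X → L // C ∈ 𝒞X} → {D : Y → L // D ∈ 𝒞Y})
    (hgl : Function.LeftInverse g
      (fun D : {D : Y → L // D ∈ 𝒞Y} =>
        (⟨fpre f D.1, hf D.1 D.2⟩ : {C : X → L // C ∈ 𝒞X})))
    (hgr : Function.RightInverse g
      (fun D : {D : Y → L // D ∈ 𝒞Y} =>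
        (⟨fpre f D.1, hf D.1 D.2⟩ : {C : X → L // C ∈ 𝒞X}))) :
    ∀ C C' : {C : X → L // C ∈ 𝒞X}, lsub C.1 C'.1 = lsub (g C).1 (g C').1 := by
  intro C C'
  -- fpre f (g C).1 = C.1
  have hpre : ∀ C : {C : X → L // C ∈ 𝒞X}, fpre f (g C).1 = C.1 := by
    intro C
    have := hgr C
    exact congrArg Subtype.val this
  apply le_antisymm
  · -- lsub C C' ≤ lsub (g C) (g C')
    set p := lsub C.1 C'.1 with hp
    have hpx : ∀ x, p * C.1 x ≤ C'.1 x := by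
      intro x
      rw [res_adj]
      exact iInf_le _ x
    -- E = res p ∘ (g C')
    set E : Y → L := fun y => res p ((g C').1 y) with hE
    have hEmem : E ∈ 𝒞Y := hY.2.2.2.2 p (g C').1 (g C').2
    -- M = (g C).1 ⊓ E
    set M : Y → L := fun y => ⨅ D ∈ ({(g C).1, E} : Set (Y → L)), D y with hM
    have hMmem : M ∈ 𝒞Y := hY.2.2.2.1 {(g C).1, E} (by
      intro D hD
      rcases hD with h | h
      · rw [h]; exact (g C).2
      · rw [Set.mem_singleton_iff.mp h]; exact hEmem)
    have hMeq : ∀ y, M y = (g C).1 y ⊓ E y := by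
      intro y
      rw [hM]
      exact iInf_pair
    -- fpre f M = C.1
    have hfM : fpre f M = C.1 := by
      funext x
      show M (f x) = C.1 x
      rw [hMeq]
      have h1 : (g C).1 (f x) = C.1 x := by
        have := congrFun (hpre C) x
        exact this
      have h2 : (g C').1 (f x) = C'.1 x := by
        have := congrFun (hpre C') x
        exact this
      rw [h1, hE]
      simp only [h2]
      have : C.1 x ≤ res p (C'.1 x) := by
        rw [← res_adj, mul_comm]
        exact hpx x
      exact inf_eq_left.mpr this
    -- injectivity gives M = (g C).1
    have hinj : (⟨M, hMmem⟩ : {D : Y → L // D ∈ 𝒞Y}) = g C := by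
      apply hbij.injective
      apply Subtype.ext
      show fpre f M = fpre f (g C).1
      rw [hfM, hpre]
    have hMval : M = (g C).1 := congrArg Subtype.val hinj
    have hle : ∀ y, (g C).1 y ≤ E y := by
      intro y
      have := hMeq y
      rw [hMval] at this
      exact inf_eq_left.mp this.symm
    refine le_iInf fun y => ?_
    rw [← res_adj]
    have := hle y
    rw [hE] at this
    rw [mul_comm]
    exact (res_adj _ _ _).mpr this
  · -- lsub (g C) (g C') ≤ lsub C C'
    refine le_iInf fun x => ?_
    have h1 : (g C).1 (f x) = C.1 x := congrFun (hpre C) x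
    have h2 : (g C').1 (f x) = C'.1 x := congrFun (hpre C') x
    calc lsub (g C).1 (g C').1 ≤ res ((g C).1 (f x)) ((g C').1 (f x)) := iInf_le _ (f x)
      _ = res (C.1 x) (C'.1 x) := by rw [h1, h2]
end

section
/- Let f : X → Y be a quasihomeomorphism between L-convex spaces and let f_* : 𝒞(X) → 𝒞(Y) denote the inverse of the bijection f^←. Then for every algebraic irreducible convex set F of X, f_*(F) = co_Y(f^→(F)); in particular, co_Y(f^→(F)) is convex and satisfies, for all D ∈ 𝒞(Y): f^→(F) ≤ D iff f_*(F) ≤ D. -/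
open CIQuantale

variable {L : Type*} [CIQuantale L]

theorem stmt19 {X Y : Type*} (𝒞X : Set (X → L)) (𝒞Y : Set (Y → L))
    (hX : IsConvexStruct 𝒞X) (hY : IsConvexStruct 𝒞Y)
    (f : X → Y) (hf : ConvPres 𝒞X 𝒞Y f)
    (hbij : Function.Bijective
      (fun D : {D : Y → L // D ∈ 𝒞Y} =>
        (⟨fpre f D.1, hf D.1 D.2⟩ : {C : X → L // C ∈ 𝒞X})))
    (g : {C : X → L // C ∈ 𝒞X} → {D : Y → L // D ∈ 𝒞Y})
    (hgl : Function.LeftInverse g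
      (fun D : {D : Y → L // D ∈ 𝒞Y} =>
        (⟨fpre f D.1, hf D.1 D.2⟩ : {C : X → L // C ∈ 𝒞X})))
    (hgr : Function.RightInverse g
      (fun D : {D : Y → L // D ∈ 𝒞Y} =>
        (⟨fpre f D.1, hf D.1 D.2⟩ : {C : X → L // C ∈ 𝒞X})))
    (F : X → L) (hF : AlgIrr 𝒞X F) :
    (g ⟨F, hF.1⟩).1 = hull 𝒞Y (fimg f F) ∧
    hull 𝒞Y (fimg f F) ∈ 𝒞Y ∧
    ∀ D ∈ 𝒞Y, (fimg f F ≤ D ↔ (g ⟨F, hF.1⟩).1 ≤ D) := by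
  classical
  -- fmap notation
  set fmap := (fun D : {D : Y → L // D ∈ 𝒞Y} =>
      (⟨fpre f D.1, hf D.1 D.2⟩ : {C : X → L // C ∈ 𝒞X})) with hfmap
  have hinj : Function.Injective fmap := hgl.injective
  -- fpre ∘ g = id on convex sets of X
  have hpg : ∀ C : {C : X → L // C ∈ 𝒞X}, fpre f (g C).1 = C.1 := fun C =>
    congrArg Subtype.val (hgr C)
  -- monotonicity of g
  have gmono : ∀ A B : {C : X → L // C ∈ 𝒞X}, A.1 ≤ B.1 → (g A).1 ≤ (g B).1 := by
    intro A B hAB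
    set M : Y → L := fun y => ⨅ C ∈ ({(g A).1, (g B).1} : Set (Y → L)), C y with hMdef
    have hM : M ∈ 𝒞Y := by
      apply hY.2.2.2.1
      intro C hC
      rcases hC with h | h
      · exact h ▸ (g A).2
      · exact h ▸ (g B).2
    have hMeq : ∀ y, M y = (g A).1 y ⊓ (g B).1 y := by
      intro y
      show (⨅ C ∈ ({(g A).1, (g B).1} : Set (Y → L)), C y) = _
      exact iInf_pair
    have hpre : fpre f M = A.1 := by
      funext x
      have h1 : (g A).1 (f x) = A.1 x := congrFun (hpg A) x
      have h2 : (g B).1 (f x) = B.1 x := congrFun (hpg B) x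
      simp only [fpre]
      rw [hMeq, h1, h2, inf_eq_left]
      exact hAB x
    have : fmap ⟨M, hM⟩ = fmap (g A) := by
      apply Subtype.ext
      simp only [hfmap]
      rw [hpre, hpg A]
    have hMA : (⟨M, hM⟩ : {D : Y → L // D ∈ 𝒞Y}) = g A := hinj this
    intro y
    have hle : M y ≤ (g B).1 y := by rw [hMeq]; exact inf_le_right
    have h3 : (g A).1 = M := (congrArg Subtype.val hMA).symm
    rw [h3]
    exact hle
  -- adjunction
  have adj : ∀ D : Y → L, fimg f F ≤ D ↔ ∀ x, F x ≤ D (f x) := by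
    intro D
    constructor
    · intro h x
      refine le_trans ?_ (h (f x))
      exact le_iSup_of_le x (le_iSup_of_le rfl le_rfl)
    · intro h y
      exact iSup_le fun x => iSup_le fun hx => hx ▸ h x
  -- the key iff
  have key : ∀ D ∈ 𝒞Y, (fimg f F ≤ D ↔ (g ⟨F, hF.1⟩).1 ≤ D) := by
    intro D hD
    constructor
    · intro h
      have hFle : F ≤ fpre f D := (adj D).1 h
      have := gmono ⟨F, hF.1⟩ ⟨fpre f D, hf D hD⟩ hFle
      have heq : g ⟨fpre f D, hf D hD⟩ = ⟨D, hD⟩ := hgl ⟨D, hD⟩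
      rw [heq] at this
      exact this
    · intro h
      refine (adj D).2 fun x => ?_
      have h1 : (g ⟨F, hF.1⟩).1 (f x) = F x := congrFun (hpg ⟨F, hF.1⟩) x
      rw [← h1]
      exact h (f x)
  have hsub : fimg f F ≤ (g ⟨F, hF.1⟩).1 :=
    (key _ (g ⟨F, hF.1⟩).2).2 le_rfl
  have hmain : (g ⟨F, hF.1⟩).1 = hull 𝒞Y (fimg f F) := by
    funext y
    apply le_antisymm
    · exact le_iInf fun C => le_iInf fun hC => ((key C hC.1).1 hC.2) y
    · exact iInf_le_of_le (g ⟨F, hF.1⟩).1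
        (iInf_le_of_le ⟨(g ⟨F, hF.1⟩).2, hsub⟩ le_rfl)
  exact ⟨hmain, hmain ▸ (g ⟨F, hF.1⟩).2, key⟩
end
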